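/- Let (κ_n) and (v_n) be sequences with κ_n ≥ 0 and v_n > 0 for all n, and set d1_n := −κ_n/v_n + v_n/2. Then C_BS(κ_n, v_n) → 0 as n → ∞ if and only if min{d1_n, log v_n} → −∞ as n → ∞. -/

import Mathlib

open MeasureTheory Filter Topology

/-- Standard normal density `φ(z) = e^{-z²/2}/√(2π)`. -/
noncomputable def stdPDF (z : ℝ) : ℝ := Real.exp (-(z^2)/2) / Real.sqrt (2*Real.pi)

/-- Standard normal distribution function `Φ(z) = ∫_{-∞}^z φ(t) dt`. -/
noncomputable def stdCDF (z : ℝ) : ℝ := ∫ t in Set.Iic z, stdPDF t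

/-- Black–Scholes call price `C_BS(κ,v) = Φ(d1) - e^κ Φ(d2)` with
`d1 = -κ/v + v/2`, `d2 = -κ/v - v/2`. -/
noncomputable def CBS (κ v : ℝ) : ℝ :=
  stdCDF (-κ/v + v/2) - Real.exp κ * stdCDF (-κ/v - v/2)

/-!
Writing `d₁ = -κ/v + v/2`, the substitution `t ↦ t - v` turns the price into
`C_BS(κ,v) = ∫_{t ≤ d₁} φ(t) (1 - e^{v(t - d₁)}) dt`, whose integrand is nonnegative.
From the definition, `C_BS ≤ Φ(d₁) ≲ e^{d₁}`, and for `κ ≥ 0` also `C_BS ≤ Φ(d₁) - Φ(d₂) ≲ v`,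
so `C_BS ≲ e^{min(d₁, log v)}`. Conversely, if `d₁ ≥ b` and `v ≥ e^b`, the part of the integral
over `(b - 2, b - 1]` is bounded below by a positive constant depending only on `b`.
-/

open Real Set

theorem stdPDF_pos (z : ℝ) : 0 < stdPDF z := by
  unfold stdPDF; positivity

theorem stdPDF_le_stdPDF_of_abs_le {s t : ℝ} (h : |s| ≤ |t|) : stdPDF t ≤ stdPDF s := by
  have := sq_le_sq.2 h
  exact div_le_div_of_nonneg_right (exp_le_exp.2 (by linarith)) (sqrt_nonneg _)

theorem stdPDF_le_mul_exp (t : ℝ) : stdPDF t ≤ exp (1/2) / √(2*π) * exp t := by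
  rw [div_mul_eq_mul_div, ← Real.exp_add, stdPDF]
  gcongr
  nlinarith [sq_nonneg (t + 1)]

theorem integrable_stdPDF : Integrable stdPDF := by
  convert (integrable_exp_neg_mul_sq (b := 1/2) (by norm_num)).div_const √(2*π) using 2 with t
  rw [stdPDF]
  ring_nf

theorem stdCDF_nonneg (z : ℝ) : 0 ≤ stdCDF z :=
  setIntegral_nonneg measurableSet_Iic fun t _ => (stdPDF_pos t).le

theorem stdCDF_le_mul_exp (z : ℝ) : stdCDF z ≤ exp (1/2) / √(2*π) * exp z := by
  calc stdCDF z ≤ ∫ t in Iic z, exp (1/2) / √(2*π) * exp t :=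
        setIntegral_mono_on integrable_stdPDF.integrableOn
          ((integrableOn_exp_Iic z).const_mul _) measurableSet_Iic
          fun t _ => stdPDF_le_mul_exp t
    _ = exp (1/2) / √(2*π) * exp z := by rw [integral_const_mul, integral_exp_Iic]

theorem stdCDF_sub_stdCDF_le {a b : ℝ} (hab : a ≤ b) :
    stdCDF b - stdCDF a ≤ (b - a) / √(2*π) := by
  have hφ0 : stdPDF 0 = 1 / √(2*π) := by simp [stdPDF]
  calc stdCDF b - stdCDF a = ∫ t in a..b, stdPDF t :=
        intervalIntegral.integral_Iic_sub_Iic integrable_stdPDF.integrableOn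
          integrable_stdPDF.integrableOn
    _ ≤ ∫ _ in a..b, stdPDF 0 :=
        intervalIntegral.integral_mono_on hab integrable_stdPDF.intervalIntegrable
          intervalIntegrable_const
          fun t _ => stdPDF_le_stdPDF_of_abs_le (by simp)
    _ = (b - a) / √(2*π) := by rw [intervalIntegral.integral_const, hφ0, smul_eq_mul]; ring

theorem setIntegral_Iic_stdPDF_sub (a c : ℝ) :
    ∫ t in Iic a, stdPDF (t - c) = stdCDF (a - c) := by
  have hpre : (fun t : ℝ => t - c) ⁻¹' Iic (a - c) = Iic a := by
    ext t; simp
  rw [stdCDF, ← (measurePreserving_sub_right volume c).setIntegral_preimage_emb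
    (MeasurableEquiv.subRight c).measurableEmbedding stdPDF (Iic (a - c)), hpre]

section BlackScholes

variable {v : ℝ}

theorem exp_mul_stdPDF_sub (κ : ℝ) (hv : v ≠ 0) (t : ℝ) :
    exp κ * stdPDF (t - v) = stdPDF t * exp (v * (t - (-κ/v + v/2))) := by
  rw [stdPDF, stdPDF, mul_div_assoc', ← Real.exp_add, div_mul_eq_mul_div, ← Real.exp_add]
  congr 2
  field_simp
  ring

theorem stdPDF_mul_one_sub_exp_eq (κ : ℝ) (hv : v ≠ 0) (t : ℝ) :
    stdPDF t * (1 - exp (v * (t - (-κ/v + v/2)))) = stdPDF t - exp κ * stdPDF (t - v) := by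
  rw [exp_mul_stdPDF_sub κ hv]
  ring

theorem integrable_stdPDF_mul_one_sub_exp (κ : ℝ) (hv : v ≠ 0) :
    Integrable fun t => stdPDF t * (1 - exp (v * (t - (-κ/v + v/2)))) := by
  simp_rw [stdPDF_mul_one_sub_exp_eq κ hv]
  exact integrable_stdPDF.sub ((integrable_stdPDF.comp_sub_right v).const_mul _)

theorem stdPDF_mul_one_sub_exp_nonneg {d t : ℝ} (hv : 0 ≤ v) (ht : t ≤ d) :
    0 ≤ stdPDF t * (1 - exp (v * (t - d))) := by
  have : exp (v * (t - d)) ≤ 1 := exp_le_one_iff.2 (mul_nonpos_of_nonneg_of_nonpos hv (by linarith))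
  exact mul_nonneg (stdPDF_pos t).le (by linarith)

theorem CBS_eq_setIntegral (κ : ℝ) (hv : v ≠ 0) :
    CBS κ v = ∫ t in Iic (-κ/v + v/2), stdPDF t * (1 - exp (v * (t - (-κ/v + v/2)))) := by
  simp_rw [stdPDF_mul_one_sub_exp_eq κ hv]
  rw [integral_sub integrable_stdPDF.integrableOn
      ((integrable_stdPDF.comp_sub_right v).const_mul _).integrableOn,
    integral_const_mul, setIntegral_Iic_stdPDF_sub, CBS,
    show -κ/v - v/2 = -κ/v + v/2 - v by ring]
  rfl

theorem CBS_nonneg (κ : ℝ) (hv : 0 < v) : 0 ≤ CBS κ v := by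
  rw [CBS_eq_setIntegral κ hv.ne']
  exact setIntegral_nonneg measurableSet_Iic fun t ht => stdPDF_mul_one_sub_exp_nonneg hv.le ht

theorem CBS_le_stdCDF (κ : ℝ) : CBS κ v ≤ stdCDF (-κ/v + v/2) := by
  have := mul_nonneg (exp_pos κ).le (stdCDF_nonneg (-κ/v - v/2))
  rw [CBS]
  linarith

theorem CBS_le_div_sqrt_two_pi {κ : ℝ} (hκ : 0 ≤ κ) (hv : 0 < v) : CBS κ v ≤ v / √(2*π) := by
  have := mul_le_mul_of_nonneg_right (one_le_exp hκ) (stdCDF_nonneg (-κ/v - v/2))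
  calc CBS κ v ≤ stdCDF (-κ/v + v/2) - stdCDF (-κ/v - v/2) := by rw [CBS]; linarith
    _ ≤ (-κ/v + v/2 - (-κ/v - v/2)) / √(2*π) := stdCDF_sub_stdCDF_le (by linarith)
    _ = v / √(2*π) := by ring_nf

theorem CBS_le_mul_exp_min {κ : ℝ} (hκ : 0 ≤ κ) (hv : 0 < v) :
    CBS κ v ≤ exp (1/2) / √(2*π) * exp (min (-κ/v + v/2) (log v)) := by
  rw [exp_monotone.map_min, exp_log hv, mul_min_of_nonneg _ _ (by positivity)]
  refine le_min ((CBS_le_stdCDF κ).trans (stdCDF_le_mul_exp _)) ?_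
  calc CBS κ v ≤ 1 * v / √(2*π) := by rw [one_mul]; exact CBS_le_div_sqrt_two_pi hκ hv
    _ ≤ exp (1/2) * v / √(2*π) := by gcongr; exact one_le_exp (by norm_num)
    _ = exp (1/2) / √(2*π) * v := by ring

theorem le_stdPDF_mul_one_sub_exp {b d t : ℝ} (hbd : b ≤ d) (hbv : exp b ≤ v)
    (ht : t ∈ Ioc (b - 2) (b - 1)) :
    (1 - exp (-exp b)) * stdPDF (|b| + 2) ≤ stdPDF t * (1 - exp (v * (t - d))) := by
  obtain ⟨hbt, htb⟩ := ht
  have hφ : stdPDF (|b| + 2) ≤ stdPDF t :=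
    stdPDF_le_stdPDF_of_abs_le (by
      rw [abs_of_nonneg (by positivity : (0 : ℝ) ≤ |b| + 2)]
      exact abs_le.2 ⟨by linarith [neg_abs_le b], by linarith [le_abs_self b]⟩)
  have hexp : exp (v * (t - d)) ≤ exp (-exp b) :=
    exp_le_exp.2 (by nlinarith [exp_pos b])
  have hpos : 0 ≤ 1 - exp (-exp b) := by
    linarith [exp_le_one_iff.2 (neg_nonpos.2 (exp_pos b).le)]
  calc (1 - exp (-exp b)) * stdPDF (|b| + 2) ≤ (1 - exp (v * (t - d))) * stdPDF t :=
        mul_le_mul (by linarith) hφ (stdPDF_pos _).le (by linarith)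
    _ = stdPDF t * (1 - exp (v * (t - d))) := mul_comm _ _

theorem exists_pos_le_CBS (b : ℝ) :
    ∃ c > 0, ∀ κ v : ℝ, 0 < v → b ≤ -κ/v + v/2 → b ≤ log v → c ≤ CBS κ v := by
  refine ⟨(1 - exp (-exp b)) * stdPDF (|b| + 2), mul_pos ?_ (stdPDF_pos _), ?_⟩
  · linarith [exp_lt_one_iff.2 (neg_lt_zero.2 (exp_pos b))]
  intro κ v hv hbd hlog
  set d := -κ/v + v/2
  have hbv : exp b ≤ v := (exp_le_exp.2 hlog).trans (exp_log hv).le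
  have hint := (integrable_stdPDF_mul_one_sub_exp κ hv.ne').integrableOn (s := Iic d)
  have hsub : Ioc (b - 2) (b - 1) ⊆ Iic d := fun t ht => ht.2.trans (by linarith)
  calc (1 - exp (-exp b)) * stdPDF (|b| + 2)
      = (1 - exp (-exp b)) * stdPDF (|b| + 2) * volume.real (Ioc (b - 2) (b - 1)) := by
        rw [measureReal_def, Real.volume_Ioc, ENNReal.toReal_ofReal (by norm_num)]
        ring
    _ ≤ ∫ t in Ioc (b - 2) (b - 1), stdPDF t * (1 - exp (v * (t - d))) :=
        setIntegral_ge_of_const_le_real measurableSet_Ioc measure_Ioc_lt_top.ne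
          (fun t ht => le_stdPDF_mul_one_sub_exp hbd hbv ht) (hint.mono_set hsub)
    _ ≤ ∫ t in Iic d, stdPDF t * (1 - exp (v * (t - d))) :=
        setIntegral_mono_set hint
          ((ae_restrict_mem measurableSet_Iic).mono fun t ht =>
            stdPDF_mul_one_sub_exp_nonneg hv.le ht)
          hsub.eventuallyLE
    _ = CBS κ v := (CBS_eq_setIntegral κ hv.ne').symm

end BlackScholes

/-- **Vanishing of the Black–Scholes price.** For `κ n ≥ 0` and `v n > 0`, with
`d1_n = -κ n/v n + v n/2`, one has `C_BS(κ n, v n) → 0` if and only if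
`min (d1_n) (log (v n)) → -∞`. -/
theorem CBS_tendsto_zero_iff
    (κ v : ℕ → ℝ) (hκ : ∀ n, 0 ≤ κ n) (hv : ∀ n, 0 < v n) :
    Tendsto (fun n => CBS (κ n) (v n)) atTop (𝓝 0) ↔
    Tendsto (fun n => min (-(κ n) / v n + v n / 2) (Real.log (v n))) atTop atBot := by
  constructor
  · intro h
    refine tendsto_atBot.2 fun b => ?_
    obtain ⟨c, hc, hle⟩ := exists_pos_le_CBS b
    filter_upwards [h.eventually_lt_const hc] with n hn
    contrapose! hn
    obtain ⟨hd₁, hlog⟩ := le_min_iff.1 hn.le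
    exact hle (κ n) (v n) (hv n) hd₁ hlog
  · intro h
    have hbound := (tendsto_exp_atBot.comp h).const_mul (exp (1/2) / √(2*π))
    rw [mul_zero] at hbound
    exact squeeze_zero (fun n => CBS_nonneg (κ n) (hv n))
      (fun n => CBS_le_mul_exp_min (hκ n) (hv n)) hbound
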